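/- arXiv:2502.07318 — 5 statements merged into one kernel-verified Lean document; each statement's English description precedes it below -/
import Mathlib

section
/- Let r₀ = (0, y₀, z₀) ∈ ℝ³ with z₀ > 0 and let p_m = (0, mΔ, 0) for m = -M,...,M with Δ > 0. Define s^{(j)} = (1/(2M+1)) ∑_m ‖r₀ - p_m‖^{-j} and s̄^{(j)} = (1/(2M+1)) ∑_m (mΔ - y₀)·‖r₀ - p_m‖^{-(j+1)}. Then for all k, l ∈ ℕ, s^{(2k)} · (s^{(2(l-1))} - z₀² s^{(2l)}) ≥ (s̄^{(k+l-1)})². -/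
/-!
With `aₘ = ‖r₀ - pₘ‖` and `dₘ = mΔ - y₀` we have `aₘ² = dₘ² + z₀²`, so
`aₘ^{-2(l-1)} - z₀² aₘ^{-2l} = (dₘ aₘ^{-l})²` and `dₘ aₘ^{-(k+l)} = aₘ^{-k} · dₘ aₘ^{-l}`.
The inequality is then Cauchy–Schwarz for the vectors `(aₘ^{-k})ₘ` and `(dₘ aₘ^{-l})ₘ`.
-/

open Finset

theorem Finset.sq_mul_sum_mul_le {ι : Type*} (S : Finset ι) (c : ℝ) (f g : ι → ℝ) :
    (c * ∑ i ∈ S, f i * g i) ^ 2 ≤ (c * ∑ i ∈ S, f i ^ 2) * (c * ∑ i ∈ S, g i ^ 2) := by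
  calc (c * ∑ i ∈ S, f i * g i) ^ 2 = c ^ 2 * (∑ i ∈ S, f i * g i) ^ 2 := by ring
    _ ≤ c ^ 2 * ((∑ i ∈ S, f i ^ 2) * ∑ i ∈ S, g i ^ 2) :=
      mul_le_mul_of_nonneg_left (sum_mul_sq_le_sq_mul_sq S f g) (sq_nonneg c)
    _ = (c * ∑ i ∈ S, f i ^ 2) * (c * ∑ i ∈ S, g i ^ 2) := by ring

theorem zpow_neg_two_mul (a : ℝ) (k : ℤ) : a ^ (-(2 * k)) = (a ^ (-k)) ^ 2 := by
  rw [← zpow_natCast, ← zpow_mul]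
  ring_nf

theorem zpow_sub_sq_mul_zpow_eq_sq {a d z : ℝ} (ha : a ≠ 0) (h : a ^ 2 = d ^ 2 + z ^ 2) (l : ℤ) :
    a ^ (-(2 * (l - 1))) - z ^ 2 * a ^ (-(2 * l)) = (d * a ^ (-l)) ^ 2 := by
  have : a ^ (-(2 * (l - 1))) = a ^ 2 * a ^ (-(2 * l)) := by
    rw [← zpow_natCast, ← zpow_add₀ ha]
    ring_nf
  rw [this, h, mul_pow, zpow_neg_two_mul]
  ring

theorem mul_zpow_neg_add_eq {a : ℝ} (ha : a ≠ 0) (d : ℝ) (k l : ℤ) :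
    d * a ^ (-((k + l - 1) + 1)) = a ^ (-k) * (d * a ^ (-l)) := by
  rw [mul_left_comm, ← zpow_add₀ ha]
  ring_nf

theorem sq_sum_le_of_sq_eq_sq_add_sq {ι : Type*} (S : Finset ι) (c z : ℝ) (a d : ι → ℝ)
    (ha : ∀ i, a i ≠ 0) (had : ∀ i, a i ^ 2 = d i ^ 2 + z ^ 2) (k l : ℤ) :
    (c * ∑ i ∈ S, d i * a i ^ (-((k + l - 1) + 1))) ^ 2 ≤
      (c * ∑ i ∈ S, a i ^ (-(2 * k))) *
        (c * ∑ i ∈ S, a i ^ (-(2 * (l - 1))) - z ^ 2 * (c * ∑ i ∈ S, a i ^ (-(2 * l)))) := by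
  have hdiff : c * ∑ i ∈ S, a i ^ (-(2 * (l - 1))) - z ^ 2 * (c * ∑ i ∈ S, a i ^ (-(2 * l))) =
      c * ∑ i ∈ S, (d i * a i ^ (-l)) ^ 2 := by
    rw [mul_left_comm, ← mul_sub, mul_sum, ← sum_sub_distrib]
    exact congrArg _ (sum_congr rfl fun i _ => zpow_sub_sq_mul_zpow_eq_sq (ha i) (had i) l)
  rw [hdiff, sum_congr rfl fun i _ => zpow_neg_two_mul (a i) k]
  simp only [mul_zpow_neg_add_eq (ha _)]
  exact sq_mul_sum_mul_le S c _ _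

theorem EuclideanSpace.norm_sub_sq_fin_three (x y : Fin 3 → ℝ) :
    ‖(WithLp.equiv 2 (Fin 3 → ℝ)).symm x - (WithLp.equiv 2 (Fin 3 → ℝ)).symm y‖ ^ 2 =
      (x 0 - y 0) ^ 2 + (x 1 - y 1) ^ 2 + (x 2 - y 2) ^ 2 := by
  rw [EuclideanSpace.norm_eq, Real.sq_sqrt (by positivity)]
  simp [Fin.sum_univ_three]

theorem ula_cauchy_schwarz_general (M : ℕ) (Δ y₀ z₀ : ℝ) (hz : 0 < z₀)
    (r₀ : EuclideanSpace ℝ (Fin 3))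
    (hr₀ : r₀ = (WithLp.equiv 2 (Fin 3 → ℝ)).symm ![0, y₀, z₀])
    (p : ℤ → EuclideanSpace ℝ (Fin 3))
    (hp : ∀ m : ℤ, p m = (WithLp.equiv 2 (Fin 3 → ℝ)).symm ![0, (m : ℝ) * Δ, 0])
    (s sb : ℤ → ℝ)
    (hs : ∀ j : ℤ, s j =
      (1 / (2 * (M : ℝ) + 1)) * ∑ m ∈ Finset.Icc (-(M : ℤ)) (M : ℤ), ‖r₀ - p m‖ ^ (-j))
    (hsb : ∀ j : ℤ, sb j =
      (1 / (2 * (M : ℝ) + 1)) * ∑ m ∈ Finset.Icc (-(M : ℤ)) (M : ℤ),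
        ((m : ℝ) * Δ - y₀) * ‖r₀ - p m‖ ^ (-(j + 1)))
    (k l : ℕ) :
    (sb ((k : ℤ) + l - 1)) ^ 2 ≤ s (2 * k) * (s (2 * ((l : ℤ) - 1)) - z₀ ^ 2 * s (2 * l)) := by
  have hdist : ∀ m : ℤ, ‖r₀ - p m‖ ^ 2 = ((m : ℝ) * Δ - y₀) ^ 2 + z₀ ^ 2 := by
    intro m
    rw [hr₀, hp, EuclideanSpace.norm_sub_sq_fin_three]
    simp
    ring
  have hpos : ∀ m : ℤ, ‖r₀ - p m‖ ≠ 0 := fun m h => by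
    have := hdist m
    rw [h] at this
    nlinarith
  rw [hs, hs, hs, hsb]
  exact sq_sum_le_of_sq_eq_sq_add_sq _ _ z₀ _ _ hpos hdist k l

/-- Cauchy–Schwarz inequality for the ULA power sums:
`s^{(2k)} (s^{(2(l-1))} - z₀² s^{(2l)}) ≥ (s̄^{(k+l-1)})²`. -/
theorem ula_cauchy_schwarz (M : ℕ) (Δ y₀ z₀ : ℝ) (hΔ : 0 < Δ) (hz : 0 < z₀)
    (r₀ : EuclideanSpace ℝ (Fin 3))
    (hr₀ : r₀ = (WithLp.equiv 2 (Fin 3 → ℝ)).symm ![0, y₀, z₀])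
    (p : ℤ → EuclideanSpace ℝ (Fin 3))
    (hp : ∀ m : ℤ, p m = (WithLp.equiv 2 (Fin 3 → ℝ)).symm ![0, (m : ℝ) * Δ, 0])
    (s sb : ℤ → ℝ)
    (hs : ∀ j : ℤ, s j =
      (1 / (2 * (M : ℝ) + 1)) * ∑ m ∈ Finset.Icc (-(M : ℤ)) (M : ℤ), ‖r₀ - p m‖ ^ (-j))
    (hsb : ∀ j : ℤ, sb j =
      (1 / (2 * (M : ℝ) + 1)) * ∑ m ∈ Finset.Icc (-(M : ℤ)) (M : ℤ),
        ((m : ℝ) * Δ - y₀) * ‖r₀ - p m‖ ^ (-(j + 1)))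
    (k l : ℕ) :
    (sb ((k : ℤ) + l - 1)) ^ 2 ≤ s (2 * k) * (s (2 * ((l : ℤ) - 1)) - z₀ ^ 2 * s (2 * l)) :=
  ula_cauchy_schwarz_general M Δ y₀ z₀ hz r₀ hr₀ p hp s sb hs hsb k l
end

section
/- With s^{(j)} and s̄^{(j)} as in the ULA setting (r₀ = (0,y₀,z₀), z₀ > 0, p_m = (0,mΔ,0)), the quantity γ₁ = (3 s^{(2)} s^{(4)} - (s̄^{(3)})² - z₀² (s^{(4)})²) / (s^{(2)})² is strictly positive. -/
/-!
With `w = ‖r₀ - p_m‖⁻²` and `u = mΔ - y₀` we have `w (u² + z₀²) = 1`, and the three moments are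
`s⁽²⁾ ∝ ∑ w`, `s⁽⁴⁾ ∝ ∑ w²`, `s̄⁽³⁾ ∝ ∑ u w²`. Cauchy–Schwarz gives `(∑ w²)² ≤ ∑ w · ∑ w³` and,
since `u² w³ = w² - z₀² w³`, also `(∑ u w²)² ≤ ∑ w · (∑ w² - z₀² ∑ w³)`. Adding them, the
numerator of `γ₁` is at least `2 ∑ w · ∑ w² > 0`.
-/

open Finset

section Moments

variable {ι : Type*} (T : Finset ι) {w u : ι → ℝ}

theorem sq_sum_sq_le_sum_mul_sum_pow_three (hw : ∀ i ∈ T, 0 ≤ w i) :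
    (∑ i ∈ T, w i ^ 2) ^ 2 ≤ (∑ i ∈ T, w i) * ∑ i ∈ T, w i ^ 3 :=
  sum_sq_le_sum_mul_sum_of_sq_le_mul T hw (fun i hi => pow_nonneg (hw i hi) 3)
    fun i _ => (by ring : _ = _).le

theorem sq_sum_mul_sq_le_of_mul_eq_one (hw : ∀ i ∈ T, 0 ≤ w i) {z : ℝ}
    (hwu : ∀ i ∈ T, w i * (u i ^ 2 + z ^ 2) = 1) :
    (∑ i ∈ T, u i * w i ^ 2) ^ 2 ≤
      (∑ i ∈ T, w i) * (∑ i ∈ T, w i ^ 2 - z ^ 2 * ∑ i ∈ T, w i ^ 3) := by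
  have hsplit : ∀ i ∈ T, u i ^ 2 * w i ^ 3 = w i ^ 2 - z ^ 2 * w i ^ 3 := fun i hi => by
    linear_combination w i ^ 2 * hwu i hi
  rw [mul_sum, ← sum_sub_distrib, ← sum_congr rfl hsplit]
  exact sum_sq_le_sum_mul_sum_of_sq_le_mul T hw
    (fun i hi => mul_nonneg (sq_nonneg _) (pow_nonneg (hw i hi) 3))
    fun i _ => (by ring : _ = _).le

theorem three_mul_sum_mul_sum_sq_sub_pos (hT : T.Nonempty) (hw : ∀ i ∈ T, 0 < w i) {z : ℝ}
    (hwu : ∀ i ∈ T, w i * (u i ^ 2 + z ^ 2) = 1) :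
    0 < 3 * (∑ i ∈ T, w i) * (∑ i ∈ T, w i ^ 2) - (∑ i ∈ T, u i * w i ^ 2) ^ 2
      - z ^ 2 * (∑ i ∈ T, w i ^ 2) ^ 2 := by
  have hw' : ∀ i ∈ T, 0 ≤ w i := fun i hi => (hw i hi).le
  have h₁ := sq_sum_sq_le_sum_mul_sum_pow_three T hw'
  have h₂ := sq_sum_mul_sq_le_of_mul_eq_one T hw' hwu
  have hpos : 0 < (∑ i ∈ T, w i) * ∑ i ∈ T, w i ^ 2 :=
    mul_pos (sum_pos hw hT) (sum_pos (fun i hi => pow_pos (hw i hi) 2) hT)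
  linarith [mul_le_mul_of_nonneg_left h₁ (sq_nonneg z)]

end Moments

theorem norm_toLp_sub_toLp_sq (y z y' : ℝ) :
    ‖(WithLp.equiv 2 (Fin 3 → ℝ)).symm ![0, y, z] -
        (WithLp.equiv 2 (Fin 3 → ℝ)).symm ![0, y', 0]‖ ^ 2 = (y' - y) ^ 2 + z ^ 2 := by
  simp [EuclideanSpace.norm_sq_eq, Fin.sum_univ_three, sq_abs, ← sq_abs (y' - y), abs_sub_comm]

theorem gamma1_pos_general (M : ℕ) (Δ y₀ z₀ : ℝ) (hz : 0 < z₀)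
    (r₀ : EuclideanSpace ℝ (Fin 3))
    (hr₀ : r₀ = (WithLp.equiv 2 (Fin 3 → ℝ)).symm ![0, y₀, z₀])
    (p : ℤ → EuclideanSpace ℝ (Fin 3))
    (hp : ∀ m : ℤ, p m = (WithLp.equiv 2 (Fin 3 → ℝ)).symm ![0, (m : ℝ) * Δ, 0])
    (s sb : ℕ → ℝ)
    (hs : ∀ j : ℕ, s j =
      (1 / (2 * (M : ℝ) + 1)) * ∑ m ∈ Finset.Icc (-(M : ℤ)) (M : ℤ), ‖r₀ - p m‖ ^ (-(j : ℤ)))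
    (hsb : ∀ j : ℕ, sb j =
      (1 / (2 * (M : ℝ) + 1)) * ∑ m ∈ Finset.Icc (-(M : ℤ)) (M : ℤ),
        ((m : ℝ) * Δ - y₀) * ‖r₀ - p m‖ ^ (-((j : ℤ) + 1)))
    (γ₁ : ℝ)
    (hγ₁ : γ₁ = (3 * s 2 * s 4 - (sb 3) ^ 2 - z₀ ^ 2 * (s 4) ^ 2) / (s 2) ^ 2) :
    0 < γ₁ := by
  set T := Icc (-(M : ℤ)) M
  set c : ℝ := 1 / (2 * (M : ℝ) + 1)
  set u : ℤ → ℝ := fun m => m * Δ - y₀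
  set w : ℤ → ℝ := fun m => (‖r₀ - p m‖ ^ 2)⁻¹
  have hdist : ∀ m, ‖r₀ - p m‖ ^ 2 = u m ^ 2 + z₀ ^ 2 := fun m => by
    rw [hr₀, hp, norm_toLp_sub_toLp_sq]
  have hwu : ∀ m ∈ T, w m * (u m ^ 2 + z₀ ^ 2) = 1 := fun m _ => by
    rw [← hdist]; exact inv_mul_cancel₀ (by rw [hdist]; positivity)
  have hw : ∀ m ∈ T, 0 < w m := fun m _ => by simp only [w, hdist]; positivity
  have hs2 : s 2 = c * ∑ m ∈ T, w m := by
    rw [hs]; simp only [w, zpow_neg, zpow_natCast]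
  have hs4 : s 4 = c * ∑ m ∈ T, w m ^ 2 := by
    rw [hs]; simp only [w, zpow_neg, zpow_natCast, inv_pow, ← pow_mul]
  have hsb3 : sb 3 = c * ∑ m ∈ T, u m * w m ^ 2 := by
    rw [hsb]; simp only [w, u, inv_pow, ← pow_mul]; norm_num
  have hT : T.Nonempty := ⟨0, by simp [T]⟩
  have hnum := three_mul_sum_mul_sum_sq_sub_pos T hT hw hwu
  have hc : 0 < c := by positivity
  rw [hγ₁, hs2, hs4, hsb3]
  apply div_pos
  · convert mul_pos (pow_pos hc 2) hnum using 1
    ring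
  · exact pow_pos (mul_pos hc (sum_pos hw hT)) 2

/-- Positivity of the curvature coefficient `γ₁` in the ULA setting. -/
theorem gamma1_pos (M : ℕ) (Δ y₀ z₀ : ℝ) (hΔ : 0 < Δ) (hz : 0 < z₀)
    (r₀ : EuclideanSpace ℝ (Fin 3))
    (hr₀ : r₀ = (WithLp.equiv 2 (Fin 3 → ℝ)).symm ![0, y₀, z₀])
    (p : ℤ → EuclideanSpace ℝ (Fin 3))
    (hp : ∀ m : ℤ, p m = (WithLp.equiv 2 (Fin 3 → ℝ)).symm ![0, (m : ℝ) * Δ, 0])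
    (s sb : ℕ → ℝ)
    (hs : ∀ j : ℕ, s j =
      (1 / (2 * (M : ℝ) + 1)) * ∑ m ∈ Finset.Icc (-(M : ℤ)) (M : ℤ), ‖r₀ - p m‖ ^ (-(j : ℤ)))
    (hsb : ∀ j : ℕ, sb j =
      (1 / (2 * (M : ℝ) + 1)) * ∑ m ∈ Finset.Icc (-(M : ℤ)) (M : ℤ),
        ((m : ℝ) * Δ - y₀) * ‖r₀ - p m‖ ^ (-((j : ℤ) + 1)))
    (γ₁ : ℝ)
    (hγ₁ : γ₁ = (3 * s 2 * s 4 - (sb 3) ^ 2 - z₀ ^ 2 * (s 4) ^ 2) / (s 2) ^ 2) :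
    0 < γ₁ :=
  gamma1_pos_general M Δ y₀ z₀ hz r₀ hr₀ p hp s sb hs hsb γ₁ hγ₁
end

section
/- In the broadside holographic setting with y₀ = 0, the quantity γ₁ = (1/(4 z₀² χ₂²)) (5χ₂ - (L² + z₀²)^{-1})(χ₂ + (L² + z₀²)^{-1}) is strictly positive, where χ₂ = arctan(L/z₀)/(L z₀), L > 0, z₀ > 0. -/
/-!
With `θ = arctan t` one has `sin θ cos θ = tan θ cos² θ = t / (1 + t²)`, and
`sin θ cos θ ≤ sin θ < θ` for `θ > 0`; hence `(1 + t²) arctan t > t`. Taking `t = L / z₀` gives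
`χ₂ (L² + z₀²) > 1`, i.e. `χ₂ > (L² + z₀²)⁻¹ > 0`, so every factor of `γ₁` is positive.
-/

open Real

lemma div_one_add_sq_lt_arctan {t : ℝ} (ht : 0 < t) : t / (1 + t ^ 2) < arctan t := by
  have hθ : 0 < arctan t := arctan_pos.2 ht
  have hsin : 0 ≤ sin (arctan t) := sin_arctan_nonneg.2 ht.le
  calc t / (1 + t ^ 2) = sin (arctan t) * cos (arctan t) := by
        rw [sin_arctan, cos_arctan, div_mul_div_comm, mul_one,
          mul_self_sqrt (by positivity)]
    _ ≤ sin (arctan t) := mul_le_of_le_one_right hsin (cos_le_one _)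
    _ < arctan t := sin_lt hθ

lemma inv_sq_add_sq_lt_arctan_div_mul {L z : ℝ} (hL : 0 < L) (hz : 0 < z) :
    (L ^ 2 + z ^ 2)⁻¹ < arctan (L / z) / (L * z) := by
  have key := div_one_add_sq_lt_arctan (div_pos hL hz)
  have hratio : L / z / (1 + (L / z) ^ 2) = (L ^ 2 + z ^ 2)⁻¹ * (L * z) := by
    field_simp
    ring
  rw [lt_div_iff₀ (by positivity), ← hratio]
  exact key

/-- Positivity of `γ₁` in the broadside holographic setting (`y₀ = 0`). -/
theorem gamma1_broadside_pos (L z₀ χ₂ : ℝ) (hL : 0 < L) (hz : 0 < z₀)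
    (hχ₂ : χ₂ = Real.arctan (L / z₀) / (L * z₀)) :
    0 < (1 / (4 * z₀ ^ 2 * χ₂ ^ 2)) * (5 * χ₂ - (L ^ 2 + z₀ ^ 2)⁻¹) *
        (χ₂ + (L ^ 2 + z₀ ^ 2)⁻¹) := by
  have hinv_pos : 0 < (L ^ 2 + z₀ ^ 2)⁻¹ := by positivity
  have hinv_lt : (L ^ 2 + z₀ ^ 2)⁻¹ < χ₂ := hχ₂ ▸ inv_sq_add_sq_lt_arctan_div_mul hL hz
  have hχ₂_pos : 0 < χ₂ := hinv_pos.trans hinv_lt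
  have hfirst : 0 < 5 * χ₂ - (L ^ 2 + z₀ ^ 2)⁻¹ := by linarith
  positivity
end

section
/- The function f(ϱ) = (ϱ/(2π)) √( (7(1+ϱ²)² φ(ϱ)² + 3(5+3ϱ²) φ(ϱ) + 2) / (4(1+ϱ²)(φ(ϱ)²(1+ϱ²) + φ(ϱ) − 2)) ), where φ(ϱ) = arctan(ϱ)/ϱ, is well-defined for all ϱ > 0; in particular, its denominator satisfies φ(ϱ)²(1+ϱ²) + φ(ϱ) − 2 > 0 for all ϱ > 0. -/
/-!
With `a = arctan ϱ` and `u = √(1 + ϱ²) = sec a`, the Cusa–Huygens inequality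
`3 sin a ≤ a (2 + cos a)` reads `arctan ϱ / ϱ ≥ 3 / (1 + 2u)`. The left-hand side of the claim
is increasing in `φ = arctan ϱ / ϱ`, and at `φ = 3 / (1 + 2u)` it equals `(u - 1)² / (1 + 2u)² > 0`.
-/

open Real Set

namespace Real

lemma mul_cos_lt_sin {x : ℝ} (h0 : 0 < x) (h1 : x < π / 2) : x * cos x < sin x := by
  have hcos : 0 < cos x := cos_pos_of_mem_Ioo ⟨by linarith [pi_pos], h1⟩
  have htan := lt_tan h0 h1
  rwa [tan_eq_sin_div_cos, lt_div_iff₀ hcos] at htan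

lemma two_sub_two_mul_cos_sub_mul_sin_pos {x : ℝ} (h0 : 0 < x) (h1 : x < π) :
    0 < 2 - 2 * cos x - x * sin x := by
  have hsin : 0 < sin (x / 2) := sin_pos_of_pos_of_lt_pi (by linarith) (by linarith)
  have hlt := mul_cos_lt_sin (x := x / 2) (by linarith) (by linarith)
  have hx : x = 2 * (x / 2) := by ring
  have hexpand : 2 - 2 * cos x - x * sin x
      = 4 * sin (x / 2) * (sin (x / 2) - x / 2 * cos (x / 2)) := by
    rw [hx, cos_two_mul, sin_two_mul, ← hx]
    linear_combination -4 * sin_sq_add_cos_sq (x / 2)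
  rw [hexpand]
  exact mul_pos (by positivity) (by linarith)

lemma hasDerivAt_mul_two_add_cos_sub_three_mul_sin (x : ℝ) :
    HasDerivAt (fun x => x * (2 + cos x) - 3 * sin x) (2 - 2 * cos x - x * sin x) x := by
  have h := ((hasDerivAt_id x).mul ((hasDerivAt_const x 2).add (hasDerivAt_cos x))).sub
    ((hasDerivAt_sin x).const_mul 3)
  exact h.congr_deriv (by simp only [Pi.add_apply, id]; ring)

/-- The Cusa–Huygens inequality. -/
lemma three_mul_sin_le_mul_two_add_cos {x : ℝ} (hx : 0 ≤ x) : 3 * sin x ≤ x * (2 + cos x) := by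
  rcases le_or_gt x π with hxπ | hxπ
  · have hmono : MonotoneOn (fun x => x * (2 + cos x) - 3 * sin x) (Icc 0 π) := by
      refine monotoneOn_of_deriv_nonneg (convex_Icc 0 π) (by fun_prop) (by fun_prop) ?_
      intro y hy
      rw [interior_Icc] at hy
      rw [(hasDerivAt_mul_two_add_cos_sub_three_mul_sin y).deriv]
      exact (two_sub_two_mul_cos_sub_mul_sin_pos hy.1 hy.2).le
    have h := hmono (left_mem_Icc.2 pi_pos.le) ⟨hx, hxπ⟩ hx
    simp only [zero_mul, sin_zero, mul_zero, sub_zero] at h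
    linarith
  · nlinarith [sin_le_one x, neg_one_le_cos x, pi_gt_three]

lemma three_div_one_add_two_sqrt_le_arctan_div {x : ℝ} (hx : 0 < x) :
    3 / (1 + 2 * √(1 + x ^ 2)) ≤ arctan x / x := by
  have hu : 0 < √(1 + x ^ 2) := sqrt_pos.2 (by positivity)
  have h := three_mul_sin_le_mul_two_add_cos (arctan_pos.2 hx).le
  rw [sin_arctan, cos_arctan] at h
  rw [div_le_div_iff₀ (by positivity) hx]
  field_simp at h
  linarith

end Real

lemma two_lt_sq_mul_sq_add_of_three_div_le {u t : ℝ} (hu : 1 < u) (ht : 3 / (1 + 2 * u) ≤ t) :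
    2 < t ^ 2 * u ^ 2 + t := by
  rw [div_le_iff₀ (by linarith)] at ht
  -- with `s = t (1 + 2u)`: `(t²u² + t - 2)(1 + 2u)² = (u - 1)² + (s - 3)(s + 3)u² + (s - 3)(1 + 2u)`
  have hgap : 0 < (t ^ 2 * u ^ 2 + t - 2) * (1 + 2 * u) ^ 2 := by
    nlinarith [mul_nonneg (sub_nonneg.2 ht) (by positivity : (0 : ℝ) ≤ (t * (1 + 2 * u) + 3) * u ^ 2),
      mul_nonneg (sub_nonneg.2 ht) (by linarith : (0 : ℝ) ≤ 1 + 2 * u)]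
  have := pos_of_mul_pos_left hgap (by positivity)
  linarith

/-- The denominator of the broadside beamfocusing feasibility function is positive:
with `φ(ϱ) = arctan ϱ / ϱ`, one has `φ(ϱ)²(1+ϱ²) + φ(ϱ) − 2 > 0` for all `ϱ > 0`. -/
theorem feasibility_denominator_pos (ϱ : ℝ) (hϱ : 0 < ϱ) :
    0 < (Real.arctan ϱ / ϱ) ^ 2 * (1 + ϱ ^ 2) + Real.arctan ϱ / ϱ - 2 := by
  have hu : 1 < √(1 + ϱ ^ 2) := by
    rw [lt_sqrt zero_le_one]
    nlinarith
  have h := two_lt_sq_mul_sq_add_of_three_div_le hu (three_div_one_add_two_sqrt_le_arctan_div hϱ)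
  rw [sq_sqrt (by positivity)] at h
  linarith
end

section
/- For 0 < t, the function g(t) = arctan(t)/t satisfies g(t)²(1+t²) + g(t) > 2; equivalently, (1+t²)(arctan t)² + t·arctan t − 2t² > 0 for all t > 0. -/
open Real

/-- Auxiliary: derivative facts for Shafer's function. -/
lemma shafer_hasDerivAt (y : ℝ) :
    HasDerivAt (fun x : ℝ => Real.arctan x - 3 * x / (1 + 2 * Real.sqrt (1 + x ^ 2)))
      (1 / (1 + y ^ 2) -
        (3 * (1 + 2 * Real.sqrt (1 + y ^ 2)) -
            3 * y * (2 * (2 * y / (2 * Real.sqrt (1 + y ^ 2))))) /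
          (1 + 2 * Real.sqrt (1 + y ^ 2)) ^ 2) y := by
  have h0 : (0:ℝ) < 1 + y ^ 2 := by positivity
  have hs : 0 < Real.sqrt (1 + y ^ 2) := Real.sqrt_pos.mpr h0
  have h1 : HasDerivAt (fun x : ℝ => 1 + x ^ 2) (2 * y) y := by
    have := (hasDerivAt_pow 2 y).const_add 1
    simpa using this
  have h2 : HasDerivAt (fun x : ℝ => Real.sqrt (1 + x ^ 2)) (2 * y / (2 * Real.sqrt (1 + y ^ 2))) y :=
    h1.sqrt (ne_of_gt h0)
  have h3 : HasDerivAt (fun x : ℝ => 1 + 2 * Real.sqrt (1 + x ^ 2))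
      (2 * (2 * y / (2 * Real.sqrt (1 + y ^ 2)))) y := (h2.const_mul 2).const_add 1
  have h4 : HasDerivAt (fun x : ℝ => 3 * x) (3 : ℝ) y := by
    simpa using (hasDerivAt_id y).const_mul 3
  have hden : 1 + 2 * Real.sqrt (1 + y ^ 2) ≠ 0 := by positivity
  have h5 := h4.div h3 hden
  have h6 := Real.hasDerivAt_arctan y
  exact h6.sub h5

/-- For `t > 0`: `(1+t²)(arctan t)² + t·arctan t − 2t² > 0`. -/
theorem arctan_quadratic_bound (t : ℝ) (ht : 0 < t) :
    0 < (1 + t ^ 2) * (Real.arctan t) ^ 2 + t * Real.arctan t - 2 * t ^ 2 := by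
  -- Shafer's inequality: arctan x > 3x/(1+2√(1+x²)) for x > 0
  have key : 3 * t / (1 + 2 * Real.sqrt (1 + t ^ 2)) < Real.arctan t := by
    set f : ℝ → ℝ := fun x => Real.arctan x - 3 * x / (1 + 2 * Real.sqrt (1 + x ^ 2)) with hf
    have hmono : StrictMonoOn f (Set.Ici 0) := by
      apply strictMonoOn_of_deriv_pos (convex_Ici 0)
      · exact fun y _ => (shafer_hasDerivAt y).differentiableAt.continuousAt.continuousWithinAt
      · intro y hy
        rw [interior_Ici] at hy
        have hy0 : 0 < y := hy
        rw [(shafer_hasDerivAt y).deriv]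
        have h0 : (0:ℝ) < 1 + y ^ 2 := by positivity
        have hs : 0 < Real.sqrt (1 + y ^ 2) := Real.sqrt_pos.mpr h0
        have hs2 : Real.sqrt (1 + y ^ 2) ^ 2 = 1 + y ^ 2 := Real.sq_sqrt (le_of_lt h0)
        have hs1 : 1 < Real.sqrt (1 + y ^ 2) := by
          nlinarith [Real.sqrt_nonneg (1 + y ^ 2)]
        set s := Real.sqrt (1 + y ^ 2)
        rw [sub_pos, div_lt_div_iff₀ (by positivity) h0]
        have hexp : 3 * (1 + 2 * s) - 3 * y * (2 * (2 * y / (2 * s))) =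
            (3 * s * (1 + 2 * s) - 6 * y ^ 2) / s := by
          field_simp; ring
        rw [hexp, div_mul_eq_mul_div, div_lt_iff₀ hs]
        nlinarith [sq_nonneg (s - 1)]
    have h01 : (0:ℝ) ∈ Set.Ici (0:ℝ) := Set.self_mem_Ici
    have := hmono h01 (Set.mem_Ici.mpr ht.le) ht
    simp only [hf, Real.arctan_zero, mul_zero, zero_pow, add_zero] at this
    norm_num at this
    linarith
  have h0 : (0:ℝ) < 1 + t ^ 2 := by positivity
  have hs : 0 < Real.sqrt (1 + t ^ 2) := Real.sqrt_pos.mpr h0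
  have hs2 : Real.sqrt (1 + t ^ 2) ^ 2 = 1 + t ^ 2 := Real.sq_sqrt (le_of_lt h0)
  have hs1 : 1 < Real.sqrt (1 + t ^ 2) := by
    nlinarith [Real.sqrt_nonneg (1 + t ^ 2)]
  set s := Real.sqrt (1 + t ^ 2)
  set a := Real.arctan t
  rw [div_lt_iff₀ (by positivity)] at key
  have hb : 0 < a * (1 + 2 * s) - 3 * t := by linarith
  nlinarith [sq_nonneg (a * (1 + 2 * s) - 3 * t), mul_pos hb ht, sq_nonneg (s - 1),
    mul_pos (mul_pos hb ht) hs, sq_nonneg (t * (s - 1)), mul_pos ht ht, sq_nonneg (s*(a*(1+2*s)-3*t))]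
end
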